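/- arXiv:2512.09770 — 2 statements merged into one kernel-verified Lean document; each statement's English description precedes it below -/
import Mathlib

section
/- For 1 ≤ p ≤ ∞ and 0 < t ≤ 1, the convolution operator f ↦ ∫ (√t + |x−y|)^{−4} f(y) dy is bounded on the weighted space L^p(ℝ³, (1+|x|²)^{−2} dx) with operator norm at most C t^{−1/2}, where C is independent of t and p. -/
open MeasureTheory ENNReal

noncomputable abbrev E3 : Type := EuclideanSpace ℝ (Fin 3)

/-- The weighted measure with density `Φ₄(x) = (1+|x|²)^{-2}`. -/
noncomputable def muPhi4 : Measure E3 :=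
  volume.withDensity (fun x => ENNReal.ofReal ((1 + ‖x‖ ^ 2) ^ (-2 : ℝ)))

/-!
This is a weighted Schur test. If a kernel `K ≥ 0` satisfies `∫ K(x, y) dy ≤ A` for every `x` and
`∫ K(x, y) w(x) dx ≤ A w(y)` for every `y`, then `f ↦ ∫ K(·, y) f(y) dy` has norm at most `A` on
`L^p(w dx)` for all `1 ≤ p ≤ ∞`. For `p = 1` this is Tonelli, and for `p > 1` Hölder's inequality
against the measure `K(x, y) dy` reduces it to the case `p = 1`.

For `K_t(x, y) = (√t + |x - y|)^{-4}` on `ℝ³`, scaling gives `∫ K_t(x, y) dy = c t^{-1/2}`. Split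
according to whether `2|x - y| < 1 + |y|`: there `Φ₄(x) ≤ 64 Φ₄(y)`, and elsewhere
`K_t(x, y) ≤ 16 Φ₄(y)`. Hence `K_t Φ₄(x) ≤ (64 K_t + 16 Φ₄(x)) Φ₄(y)`, and integrating in `x`
gives the second condition with `A = C t^{-1/2}` when `t ≤ 1`.
-/

open Function Module

section SchurTest

variable {α : Type*} [MeasurableSpace α] {μ : Measure α}

theorem rpow_lintegral_mul_le {k g : α → ℝ≥0∞} (hk : AEMeasurable k μ)
    (hg : AEMeasurable g μ) {p : ℝ} (hp : 1 ≤ p) :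
    (∫⁻ y, k y * g y ∂μ) ^ p ≤ (∫⁻ y, k y ∂μ) ^ (p - 1) * ∫⁻ y, k y * g y ^ p ∂μ := by
  rcases hp.eq_or_lt with rfl | hp
  · simp
  have hp0 : 0 < p := one_pos.trans hp
  set q := p.conjExponent
  have hpq : p.HolderConjugate q := .conjExponent hp
  have hq0 : 0 < q := hpq.symm.pos
  -- Hölder for the splitting `k g = k ^ (1/q) * (k ^ (1/p) * g)`
  have holder := lintegral_mul_le_Lp_mul_Lq μ hpq.symm (f := fun y => k y ^ (1 / q))
    (g := fun y => k y ^ (1 / p) * g y) (by fun_prop) (by fun_prop)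
  have hsplit : ∀ y, k y ^ (1 / q) * (k y ^ (1 / p) * g y) = k y * g y := fun y => by
    rw [← mul_assoc, ← ENNReal.rpow_add_of_nonneg _ _ (by positivity) (by positivity),
      one_div, one_div, add_comm, hpq.inv_add_inv_eq_one, ENNReal.rpow_one]
  have hk : ∀ y, (k y ^ (1 / q)) ^ q = k y := fun y => by
    rw [← ENNReal.rpow_mul, one_div_mul_cancel hq0.ne', ENNReal.rpow_one]
  have hkg : ∀ y, (k y ^ (1 / p) * g y) ^ p = k y * g y ^ p := fun y => by
    rw [ENNReal.mul_rpow_of_nonneg _ _ hp0.le, ← ENNReal.rpow_mul, one_div_mul_cancel hp0.ne',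
      ENNReal.rpow_one]
  simp only [Pi.mul_apply, hsplit, hk, hkg] at holder
  calc (∫⁻ y, k y * g y ∂μ) ^ p
      ≤ ((∫⁻ y, k y ∂μ) ^ (1 / q) * (∫⁻ y, k y * g y ^ p ∂μ) ^ (1 / p)) ^ p :=
        ENNReal.rpow_le_rpow holder hp0.le
    _ = (∫⁻ y, k y ∂μ) ^ (p - 1) * ∫⁻ y, k y * g y ^ p ∂μ := by
        rw [ENNReal.mul_rpow_of_nonneg _ _ hp0.le, ← ENNReal.rpow_mul, ← ENNReal.rpow_mul,
          one_div_mul_cancel hp0.ne', ENNReal.rpow_one]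
        congr 2
        simp only [q, Real.conjExponent]
        field_simp

theorem integral_mul_eq_zero_of_not_aestronglyMeasurable {k f : α → ℝ} (hk : Measurable k)
    (hk0 : ∀ y, k y ≠ 0) (hf : ¬AEStronglyMeasurable f μ) : ∫ y, k y * f y ∂μ = 0 :=
  integral_undef fun hint => hf <| (hk.inv.aestronglyMeasurable.mul hint.1).congr <|
    ae_of_all _ fun y => inv_mul_cancel_left₀ (hk0 y) (f y)

variable [SFinite μ] {K : α → α → ℝ≥0∞} {w g : α → ℝ≥0∞} {A : ℝ≥0∞}

theorem lintegral_lintegral_kernel_mul_le (hK : Measurable (uncurry K)) (hw : Measurable w)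
    (hg : Measurable g) (hcol : ∀ y, ∫⁻ x, K x y * w x ∂μ ≤ A * w y) :
    ∫⁻ x, (∫⁻ y, K x y * g y ∂μ) * w x ∂μ ≤ A * ∫⁻ y, g y * w y ∂μ :=
  calc ∫⁻ x, (∫⁻ y, K x y * g y ∂μ) * w x ∂μ
      = ∫⁻ x, ∫⁻ y, K x y * g y * w x ∂μ ∂μ :=
        lintegral_congr fun x => (lintegral_mul_const _ (hK.of_uncurry_left.mul hg)).symm
    _ = ∫⁻ y, g y * ∫⁻ x, K x y * w x ∂μ ∂μ := by
        rw [lintegral_lintegral_swap (by fun_prop)]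
        refine lintegral_congr fun y => ?_
        rw [← lintegral_const_mul (f := fun x => K x y * w x) _ (hK.of_uncurry_right.mul hw)]
        exact lintegral_congr fun x => by ring
    _ ≤ ∫⁻ y, g y * (A * w y) ∂μ := lintegral_mono fun y => mul_le_mul_right (hcol y) _
    _ = A * ∫⁻ y, g y * w y ∂μ := by
        rw [← lintegral_const_mul (f := fun y => g y * w y) _ (hg.mul hw)]
        exact lintegral_congr fun y => by ring

theorem lintegral_lintegral_kernel_rpow_mul_le (hK : Measurable (uncurry K))
    (hw : Measurable w) (hg : Measurable g) (hrow : ∀ x, ∫⁻ y, K x y ∂μ ≤ A)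
    (hcol : ∀ y, ∫⁻ x, K x y * w x ∂μ ≤ A * w y) {p : ℝ} (hp : 1 ≤ p) :
    ∫⁻ x, (∫⁻ y, K x y * g y ∂μ) ^ p * w x ∂μ ≤ A ^ p * ∫⁻ y, g y ^ p * w y ∂μ :=
  calc ∫⁻ x, (∫⁻ y, K x y * g y ∂μ) ^ p * w x ∂μ
      ≤ ∫⁻ x, A ^ (p - 1) * ((∫⁻ y, K x y * g y ^ p ∂μ) * w x) ∂μ := by
        refine lintegral_mono fun x => ?_
        rw [← mul_assoc]
        have hKx : Measurable (K x) := hK.of_uncurry_left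
        refine mul_le_mul_left ((rpow_lintegral_mul_le hKx.aemeasurable hg.aemeasurable hp).trans
          (mul_le_mul_left (ENNReal.rpow_le_rpow (hrow x) (by linarith)) _)) _
    _ = A ^ (p - 1) * ∫⁻ x, (∫⁻ y, K x y * g y ^ p ∂μ) * w x ∂μ :=
        lintegral_const_mul _ (by fun_prop)
    _ ≤ A ^ (p - 1) * (A * ∫⁻ y, g y ^ p * w y ∂μ) :=
        mul_le_mul_right (lintegral_lintegral_kernel_mul_le hK hw (by fun_prop) hcol) _
    _ = A ^ p * ∫⁻ y, g y ^ p * w y ∂μ := by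
        rw [← mul_assoc]
        congr 1
        conv_rhs => rw [show p = (p - 1) + 1 by ring]
        rw [ENNReal.rpow_add_of_nonneg _ _ (by linarith) zero_le_one, ENNReal.rpow_one]

theorem eLpNorm_lintegral_kernel_le (hK : Measurable (uncurry K)) (hw : Measurable w)
    (hw0 : ∀ x, w x ≠ 0) (hg : Measurable g) (hrow : ∀ x, ∫⁻ y, K x y ∂μ ≤ A)
    (hcol : ∀ y, ∫⁻ x, K x y * w x ∂μ ≤ A * w y) {p : ℝ≥0∞} (hp : 1 ≤ p) :
    eLpNorm (fun x => ∫⁻ y, K x y * g y ∂μ) p (μ.withDensity w)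
      ≤ A * eLpNorm g p (μ.withDensity w) := by
  rcases eq_or_ne p ∞ with rfl | hp_top
  · simp only [eLpNorm_exponent_top]
    set M := eLpNormEssSup g (μ.withDensity w)
    have hg_le : ∀ᵐ y ∂μ, g y ≤ M :=
      ((ae_withDensity_iff hw).1 (enorm_ae_le_eLpNormEssSup g _)).mono fun y hy => hy (hw0 y)
    refine eLpNormEssSup_le_of_ae_enorm_bound (Filter.Eventually.of_forall fun x => ?_)
    calc ∫⁻ y, K x y * g y ∂μ ≤ ∫⁻ y, K x y * M ∂μ :=
          lintegral_mono_ae (hg_le.mono fun y hy => mul_le_mul_right hy _)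
      _ = (∫⁻ y, K x y ∂μ) * M := lintegral_mul_const _ hK.of_uncurry_left
      _ ≤ A * M := mul_le_mul_left (hrow x) _
  have hp0 : p ≠ 0 := (one_pos.trans_le hp).ne'
  have hpr : 1 ≤ p.toReal := by simpa using ENNReal.toReal_mono hp_top hp
  have hpr0 : 0 < p.toReal := one_pos.trans_le hpr
  simp only [eLpNorm_eq_lintegral_rpow_enorm_toReal hp0 hp_top, enorm_eq_self]
  rw [lintegral_withDensity_eq_lintegral_mul _ hw (by fun_prop),
    lintegral_withDensity_eq_lintegral_mul _ hw (by fun_prop)]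
  simp only [Pi.mul_apply]
  calc (∫⁻ x, w x * (∫⁻ y, K x y * g y ∂μ) ^ p.toReal ∂μ) ^ (1 / p.toReal)
      ≤ (A ^ p.toReal * ∫⁻ y, w y * g y ^ p.toReal ∂μ) ^ (1 / p.toReal) := by
        refine ENNReal.rpow_le_rpow ?_ (by positivity)
        simpa only [mul_comm (w _)] using
          lintegral_lintegral_kernel_rpow_mul_le hK hw hg hrow hcol hpr
    _ = A * (∫⁻ y, w y * g y ^ p.toReal ∂μ) ^ (1 / p.toReal) := by
        rw [ENNReal.mul_rpow_of_nonneg _ _ (by positivity), ← ENNReal.rpow_mul,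
          mul_one_div_cancel hpr0.ne', ENNReal.rpow_one]

theorem eLpNorm_integral_kernel_mul_le {K : α → α → ℝ} (hK : Measurable (uncurry K))
    (hK0 : ∀ x y, 0 ≤ K x y) (hw : Measurable w) (hw0 : ∀ x, w x ≠ 0)
    (hrow : ∀ x, ∫⁻ y, ENNReal.ofReal (K x y) ∂μ ≤ A)
    (hcol : ∀ y, ∫⁻ x, ENNReal.ofReal (K x y) * w x ∂μ ≤ A * w y)
    {f : α → ℝ} (hf : AEStronglyMeasurable f μ) {p : ℝ≥0∞} (hp : 1 ≤ p) :
    eLpNorm (fun x => ∫ y, K x y * f y ∂μ) p (μ.withDensity w)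
      ≤ A * eLpNorm f p (μ.withDensity w) := by
  have hptw : ∀ x,
      ‖∫ y, K x y * f y ∂μ‖ₑ ≤ ∫⁻ y, ENNReal.ofReal (K x y) * ‖hf.mk f y‖ₑ ∂μ := fun x =>
    (enorm_integral_le_lintegral_enorm _).trans_eq <| lintegral_congr_ae <|
      hf.ae_eq_mk.mono fun y hy => by
        dsimp only
        rw [enorm_mul, hy, Real.enorm_of_nonneg (hK0 x y)]
  calc eLpNorm (fun x => ∫ y, K x y * f y ∂μ) p (μ.withDensity w)
      ≤ eLpNorm (fun x => ∫⁻ y, ENNReal.ofReal (K x y) * ‖hf.mk f y‖ₑ ∂μ) p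
          (μ.withDensity w) :=
        eLpNorm_mono_enorm fun x => (hptw x).trans_eq (enorm_eq_self _).symm
    _ ≤ A * eLpNorm (fun y => ‖hf.mk f y‖ₑ) p (μ.withDensity w) :=
        eLpNorm_lintegral_kernel_le hK.ennreal_ofReal hw hw0
          hf.stronglyMeasurable_mk.measurable.enorm hrow hcol hp
    _ = A * eLpNorm f p (μ.withDensity w) := by
        rw [eLpNorm_enorm, eLpNorm_congr_ae
          (hf.ae_eq_mk.filter_mono (withDensity_absolutelyContinuous μ w).ae_le).symm]

end SchurTest

section Scaling

variable {E : Type*} [NormedAddCommGroup E] [NormedSpace ℝ E] [FiniteDimensional ℝ E]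
  [MeasurableSpace E] [BorelSpace E] (μ : Measure E) [μ.IsAddHaarMeasure]

theorem lintegral_comp_inv_smul_of_pos (f : E → ℝ≥0∞) {R : ℝ} (hR : 0 < R) :
    ∫⁻ x, f (R⁻¹ • x) ∂μ = ENNReal.ofReal (R ^ finrank ℝ E) * ∫⁻ x, f x ∂μ := by
  have hR' : R⁻¹ ≠ 0 := inv_ne_zero hR.ne'
  calc ∫⁻ x, f (R⁻¹ • x) ∂μ = ∫⁻ x, f x ∂μ.map (R⁻¹ • ·) :=
        (lintegral_map_equiv f (MeasurableEquiv.smul₀ R⁻¹ hR')).symm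
    _ = ENNReal.ofReal (R ^ finrank ℝ E) * ∫⁻ x, f x ∂μ := by
        rw [Measure.map_addHaar_smul μ hR', lintegral_smul_measure, inv_pow, inv_inv,
          abs_of_pos (by positivity), smul_eq_mul]

theorem lintegral_add_norm_rpow_neg {s : ℝ} (hs : 0 < s) (r : ℝ) :
    ∫⁻ x, ENNReal.ofReal ((s + ‖x‖) ^ (-r)) ∂μ
      = ENNReal.ofReal (s ^ ((finrank ℝ E : ℝ) - r))
        * ∫⁻ x, ENNReal.ofReal ((1 + ‖x‖) ^ (-r)) ∂μ := by
  have hscale : ∀ x : E, ENNReal.ofReal ((s + ‖x‖) ^ (-r))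
      = ENNReal.ofReal (s ^ (-r)) * ENNReal.ofReal ((1 + ‖s⁻¹ • x‖) ^ (-r)) := fun x => by
    rw [← ENNReal.ofReal_mul (by positivity), ← Real.mul_rpow hs.le (by positivity), norm_smul,
      Real.norm_of_nonneg (inv_nonneg.2 hs.le), mul_add, mul_one, mul_inv_cancel_left₀ hs.ne']
  simp only [hscale]
  rw [lintegral_const_mul' _ _ ofReal_ne_top,
    lintegral_comp_inv_smul_of_pos μ (fun x => ENNReal.ofReal ((1 + ‖x‖) ^ (-r))) hs,
    ← mul_assoc, ← ENNReal.ofReal_mul (by positivity), ← Real.rpow_natCast,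
    ← Real.rpow_add hs, neg_add_eq_sub]

end Scaling

section KernelBounds

theorem one_add_sq_rpow_neg_two_le {a b : ℝ} (hb : 0 ≤ b) (hab : b ≤ 2 * a + 1) :
    (1 + a ^ 2) ^ (-2 : ℝ) ≤ 64 * (1 + b ^ 2) ^ (-2 : ℝ) := by
  simp only [Real.rpow_neg_ofNat, zpow_neg, zpow_ofNat]
  have : 1 + b ^ 2 ≤ 8 * (1 + a ^ 2) := by
    nlinarith [sq_nonneg (2 * a - 1), mul_le_mul hab hab hb (by linarith)]
  rw [← div_eq_mul_inv, inv_le_comm₀ (by positivity) (by positivity), inv_div,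
    div_le_iff₀ (by norm_num)]
  nlinarith

theorem add_rpow_neg_four_le {s d b : ℝ} (hs : 0 ≤ s) (hb : 0 ≤ b) (hbd : 1 + b ≤ 2 * d) :
    (s + d) ^ (-4 : ℝ) ≤ 16 * (1 + b ^ 2) ^ (-2 : ℝ) := by
  have hd : 0 < d := by linarith
  simp only [Real.rpow_neg_ofNat, zpow_neg, zpow_ofNat]
  have h1 : (1 + b ^ 2) ^ 2 ≤ (1 + b) ^ 4 := by nlinarith
  have h2 : (1 + b) ^ 4 ≤ 16 * (s + d) ^ 4 := by
    calc (1 + b) ^ 4 ≤ (2 * (s + d)) ^ 4 := by gcongr; linarith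
    _ = 16 * (s + d) ^ 4 := by ring
  rw [← div_eq_mul_inv, inv_le_comm₀ (by positivity) (by positivity), inv_div,
    div_le_iff₀ (by norm_num)]
  nlinarith

theorem kernel_mul_weight_le {E : Type*} [SeminormedAddCommGroup E] {s : ℝ} (hs : 0 ≤ s)
    (x y : E) :
    (s + ‖x - y‖) ^ (-4 : ℝ) * (1 + ‖x‖ ^ 2) ^ (-2 : ℝ)
      ≤ (64 * (s + ‖x - y‖) ^ (-4 : ℝ) + 16 * (1 + ‖x‖ ^ 2) ^ (-2 : ℝ))
        * (1 + ‖y‖ ^ 2) ^ (-2 : ℝ) := by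
  have hK : 0 ≤ (s + ‖x - y‖) ^ (-4 : ℝ) := by positivity
  have hwx : 0 ≤ (1 + ‖x‖ ^ 2) ^ (-2 : ℝ) := by positivity
  have htri : ‖y‖ ≤ ‖x‖ + ‖x - y‖ := norm_le_insert x y
  rcases lt_or_ge (2 * ‖x - y‖) (1 + ‖y‖) with hnear | hfar
  · have := one_add_sq_rpow_neg_two_le (a := ‖x‖) (norm_nonneg y) (by linarith)
    nlinarith [mul_le_mul_of_nonneg_left this hK]
  · have := add_rpow_neg_four_le hs (norm_nonneg y) hfar
    nlinarith [mul_le_mul_of_nonneg_right this hwx]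

theorem lintegral_sqrt_add_norm_rpow_neg_four {t : ℝ} (ht : 0 < t) :
    ∫⁻ z : E3, ENNReal.ofReal ((Real.sqrt t + ‖z‖) ^ (-4 : ℝ))
      = ENNReal.ofReal (t ^ (-(1 : ℝ) / 2))
        * ∫⁻ z : E3, ENNReal.ofReal ((1 + ‖z‖) ^ (-4 : ℝ)) := by
  rw [lintegral_add_norm_rpow_neg volume (Real.sqrt_pos.2 ht), finrank_euclideanSpace_fin,
    Real.sqrt_eq_rpow, ← Real.rpow_mul ht.le]
  norm_num

noncomputable def schurConst : ℝ≥0∞ :=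
  64 * (∫⁻ z : E3, ENNReal.ofReal ((1 + ‖z‖) ^ (-4 : ℝ)))
    + 16 * ∫⁻ x : E3, ENNReal.ofReal ((1 + ‖x‖ ^ 2) ^ (-2 : ℝ))

theorem schurConst_ne_top : schurConst ≠ ∞ := by
  have hK : ∫⁻ z : E3, ENNReal.ofReal ((1 + ‖z‖) ^ (-4 : ℝ)) < ∞ :=
    finite_integral_one_add_norm (by norm_num)
  have hw := (integrable_rpow_neg_one_add_norm_sq (E := E3) (μ := volume) (r := 4)
    (by norm_num)).lintegral_lt_top
  rw [show (-4 : ℝ) / 2 = -2 by norm_num] at hw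
  unfold schurConst
  exact ENNReal.add_ne_top.2 ⟨mul_ne_top (by norm_num : (64 : ℝ≥0∞) ≠ ∞) hK.ne,
    mul_ne_top (by norm_num : (16 : ℝ≥0∞) ≠ ∞) hw.ne⟩

theorem schurConst_ne_zero : schurConst ≠ 0 := by
  intro h
  unfold schurConst at h
  obtain ⟨h64, -⟩ := add_eq_zero.1 h
  have hK : ∫⁻ z : E3, ENNReal.ofReal ((1 + ‖z‖) ^ (-4 : ℝ)) = 0 :=
    (mul_eq_zero.1 h64).resolve_left (by norm_num)
  have hcont : Continuous fun z : E3 => ENNReal.ofReal ((1 + ‖z‖) ^ (-4 : ℝ)) :=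
    ENNReal.continuous_ofReal.comp <| (continuous_const.add continuous_norm).rpow_const
      fun z => .inl (by positivity : (1 : ℝ) + ‖z‖ ≠ 0)
  have := congrFun ((lintegral_eq_zero_of_isAddLeftInvariant hcont).1 hK) 0
  simp at this

theorem lintegral_kernel_sub_le {t : ℝ} (ht : 0 < t) (x : E3) :
    ∫⁻ y, ENNReal.ofReal ((Real.sqrt t + ‖x - y‖) ^ (-4 : ℝ))
      ≤ schurConst * ENNReal.ofReal (t ^ (-(1 : ℝ) / 2)) := by
  rw [lintegral_sub_left_eq_self (fun z => ENNReal.ofReal ((Real.sqrt t + ‖z‖) ^ (-4 : ℝ))) x,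
    lintegral_sqrt_add_norm_rpow_neg_four ht, mul_comm]
  gcongr
  exact (le_mul_of_one_le_left' (by norm_num)).trans le_self_add

theorem lintegral_kernel_sub_mul_weight_le {t : ℝ} (ht : 0 < t) (ht1 : t ≤ 1) (y : E3) :
    ∫⁻ x, ENNReal.ofReal ((Real.sqrt t + ‖x - y‖) ^ (-4 : ℝ))
        * ENNReal.ofReal ((1 + ‖x‖ ^ 2) ^ (-2 : ℝ))
      ≤ schurConst * ENNReal.ofReal (t ^ (-(1 : ℝ) / 2))
        * ENNReal.ofReal ((1 + ‖y‖ ^ 2) ^ (-2 : ℝ)) := by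
  set T := ENNReal.ofReal (t ^ (-(1 : ℝ) / 2))
  set I := ∫⁻ z : E3, ENNReal.ofReal ((1 + ‖z‖) ^ (-4 : ℝ))
  set J := ∫⁻ x : E3, ENNReal.ofReal ((1 + ‖x‖ ^ 2) ^ (-2 : ℝ))
  have hT : 1 ≤ T := ENNReal.one_le_ofReal.2 <|
    Real.one_le_rpow_of_pos_of_le_one_of_nonpos ht ht1 (by norm_num)
  calc ∫⁻ x, ENNReal.ofReal ((Real.sqrt t + ‖x - y‖) ^ (-4 : ℝ))
        * ENNReal.ofReal ((1 + ‖x‖ ^ 2) ^ (-2 : ℝ))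
      ≤ ∫⁻ x, (64 * ENNReal.ofReal ((Real.sqrt t + ‖x - y‖) ^ (-4 : ℝ))
          + 16 * ENNReal.ofReal ((1 + ‖x‖ ^ 2) ^ (-2 : ℝ)))
          * ENNReal.ofReal ((1 + ‖y‖ ^ 2) ^ (-2 : ℝ)) := by
        refine lintegral_mono fun x => ?_
        rw [← ENNReal.ofReal_mul (by positivity)]
        refine (ENNReal.ofReal_le_ofReal
          (kernel_mul_weight_le (Real.sqrt_nonneg t) x y)).trans_eq ?_
        rw [ENNReal.ofReal_mul (by positivity), ENNReal.ofReal_add (by positivity) (by positivity),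
          ENNReal.ofReal_mul (by norm_num), ENNReal.ofReal_mul (by norm_num),
          ENNReal.ofReal_ofNat, ENNReal.ofReal_ofNat]
    _ = (64 * (T * I) + 16 * J) * ENNReal.ofReal ((1 + ‖y‖ ^ 2) ^ (-2 : ℝ)) := by
        rw [lintegral_mul_const _ (by fun_prop), lintegral_add_left (by fun_prop),
          lintegral_const_mul _ (by fun_prop), lintegral_const_mul _ (by fun_prop),
          lintegral_sub_right_eq_self
            (fun z => ENNReal.ofReal ((Real.sqrt t + ‖z‖) ^ (-4 : ℝ))) y,
          lintegral_sqrt_add_norm_rpow_neg_four ht]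
    _ ≤ (64 * (T * I) + T * (16 * J)) * ENNReal.ofReal ((1 + ‖y‖ ^ 2) ^ (-2 : ℝ)) := by
        gcongr (64 * (T * I) + ?_) * _
        exact le_mul_of_one_le_left' hT
    _ = schurConst * T * ENNReal.ofReal ((1 + ‖y‖ ^ 2) ^ (-2 : ℝ)) := by
        rw [schurConst]
        ring

end KernelBounds

/-- the convolution with the kernel `(√t + |x-y|)^{-4}` is bounded on
`L^p(Φ₄ dx)` for all `1 ≤ p ≤ ∞` and `0 < t ≤ 1`, with operator norm at most `C t^{-1/2}`,
`C` independent of `t` and `p`. -/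
theorem stmt0 :
    ∃ C > (0 : ℝ), ∀ (p : ℝ≥0∞), 1 ≤ p → ∀ (t : ℝ), 0 < t → t ≤ 1 →
      ∀ f : E3 → ℝ,
        eLpNorm (fun x => ∫ y, (Real.sqrt t + ‖x - y‖) ^ (-4 : ℝ) * f y) p muPhi4
          ≤ ENNReal.ofReal (C * t ^ (-(1 : ℝ) / 2)) * eLpNorm f p muPhi4 := by
  refine ⟨schurConst.toReal, ENNReal.toReal_pos schurConst_ne_zero schurConst_ne_top,
    fun p hp t ht ht1 f => ?_⟩
  rw [ENNReal.ofReal_mul ENNReal.toReal_nonneg, ENNReal.ofReal_toReal schurConst_ne_top]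
  have hK : ∀ x y : E3, 0 < (Real.sqrt t + ‖x - y‖) ^ (-4 : ℝ) := fun x y =>
    Real.rpow_pos_of_pos (by positivity) _
  by_cases hf : AEStronglyMeasurable f volume
  · exact eLpNorm_integral_kernel_mul_le (by measurability) (fun x y => (hK x y).le)
      (by measurability) (fun x => (ENNReal.ofReal_pos.2 (by positivity)).ne')
      (lintegral_kernel_sub_le ht) (lintegral_kernel_sub_mul_weight_le ht ht1) hf hp
  -- otherwise every Bochner integral defining the operator takes the junk value `0`
  · have hzero : (fun x => ∫ y, (Real.sqrt t + ‖x - y‖) ^ (-4 : ℝ) * f y) = 0 :=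
      funext fun x => integral_mul_eq_zero_of_not_aestronglyMeasurable (by fun_prop)
        (fun y => (hK x y).ne') hf
    rw [hzero, eLpNorm_zero]
    exact zero_le
end

section
/- For p = 1 and 0 < t ≤ 1: ‖(1+|x|)^{−4} ∫ (√t + |x−y|)^{−4} (1+|y|)^{4} g(y) dy‖_{L¹(ℝ³)} ≤ C t^{−1/2} ‖g‖_{L¹(ℝ³)} for all nonnegative g ∈ L¹(ℝ³). -/
open MeasureTheory ENNReal

/-!
Because `1 + ‖y‖ ≤ (1 + ‖x‖) + (√t + ‖x - y‖)` and `(a + b)⁴ ≤ 8 (a⁴ + b⁴)`, the kernel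
`(1 + ‖x‖)⁻⁴ (√t + ‖x - y‖)⁻⁴ (1 + ‖y‖)⁴` is at most `8 ((√t + ‖x - y‖)⁻⁴ + (1 + ‖x‖)⁻⁴)`.
By Tonelli it remains to integrate this bound in `x`: translation invariance and the dilation
`w ↦ √t • w` turn it into `8 (t^{-1/2} + 1) ∫ (1 + ‖w‖)⁻⁴`, which is `O(t^{-1/2})` for `t ≤ 1`.
-/

open Module

lemma Real.rpow_add_le_mul_rpow_add_rpow {p a b : ℝ} (ha : 0 ≤ a) (hb : 0 ≤ b) (hp : 1 ≤ p) :
    (a + b) ^ p ≤ 2 ^ (p - 1) * (a ^ p + b ^ p) := by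
  lift a to NNReal using ha
  lift b to NNReal using hb
  exact_mod_cast NNReal.rpow_add_le_mul_rpow_add_rpow a b hp

lemma rpow_neg_mul_rpow_neg_mul_rpow_le {p a b c : ℝ} (hp : 1 ≤ p) (ha : 0 < a) (hb : 0 < b)
    (hc : 0 ≤ c) (hcab : c ≤ a + b) :
    a ^ (-p) * b ^ (-p) * c ^ p ≤ 2 ^ (p - 1) * (b ^ (-p) + a ^ (-p)) :=
  calc a ^ (-p) * b ^ (-p) * c ^ p
      ≤ a ^ (-p) * b ^ (-p) * (2 ^ (p - 1) * (a ^ p + b ^ p)) := by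
        gcongr
        exact (Real.rpow_le_rpow hc hcab (by linarith)).trans
          (Real.rpow_add_le_mul_rpow_add_rpow ha.le hb.le hp)
    _ = 2 ^ (p - 1) * (b ^ (-p) + a ^ (-p)) := by
        rw [Real.rpow_neg ha.le, Real.rpow_neg hb.le]
        field_simp

lemma ofReal_weight_mul_integral_le_lintegral {E : Type*} [NormedAddCommGroup E]
    [MeasurableSpace E] (μ : Measure E) {s p : ℝ} (hs : 0 < s) (hp : 1 ≤ p) {g : E → ℝ}
    (hg : 0 ≤ g) (x : E) :
    ENNReal.ofReal ((1 + ‖x‖) ^ (-p) * ∫ y, (s + ‖x - y‖) ^ (-p) * (1 + ‖y‖) ^ p * g y ∂μ)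
      ≤ ENNReal.ofReal (2 ^ (p - 1)) *
        ∫⁻ y, ENNReal.ofReal ((s + ‖x - y‖) ^ (-p) + (1 + ‖x‖) ^ (-p)) *
          ENNReal.ofReal (g y) ∂μ := by
  rw [← integral_const_mul, ← lintegral_const_mul' _ _ ofReal_ne_top]
  refine (Real.ofReal_le_enorm _).trans ((enorm_integral_le_lintegral_enorm _).trans
    (lintegral_mono fun y => ?_))
  have hy : 1 + ‖y‖ ≤ (1 + ‖x‖) + (s + ‖x - y‖) := by
    linarith [norm_le_norm_add_norm_sub' y x, norm_sub_rev x y]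
  have hkernel := rpow_neg_mul_rpow_neg_mul_rpow_le (a := 1 + ‖x‖) (b := s + ‖x - y‖)
    (c := 1 + ‖y‖) hp (by positivity) (by positivity) (by positivity) hy
  have hK : 0 ≤ (s + ‖x - y‖) ^ (-p) + (1 + ‖x‖) ^ (-p) := by positivity
  have hF : 0 ≤ (1 + ‖x‖) ^ (-p) * ((s + ‖x - y‖) ^ (-p) * (1 + ‖y‖) ^ p * g y) :=
    mul_nonneg (by positivity) (mul_nonneg (by positivity) (hg y))
  rw [Real.enorm_of_nonneg hF, ← ofReal_mul hK,
    ← ofReal_mul (by positivity : (0 : ℝ) ≤ 2 ^ (p - 1))]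
  refine ofReal_le_ofReal ?_
  calc (1 + ‖x‖) ^ (-p) * ((s + ‖x - y‖) ^ (-p) * (1 + ‖y‖) ^ p * g y)
      = (1 + ‖x‖) ^ (-p) * (s + ‖x - y‖) ^ (-p) * (1 + ‖y‖) ^ p * g y := by ring
    _ ≤ 2 ^ (p - 1) * ((s + ‖x - y‖) ^ (-p) + (1 + ‖x‖) ^ (-p)) * g y := by gcongr; exact hg y
    _ = _ := by ring

section AddHaar

variable {E : Type*} [NormedAddCommGroup E] [NormedSpace ℝ E] [FiniteDimensional ℝ E]
  [MeasurableSpace E] [BorelSpace E] (μ : Measure E) [μ.IsAddHaarMeasure]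

lemma lintegral_ofReal_add_norm_rpow_neg {s : ℝ} (hs : 0 < s) (p : ℝ) :
    ∫⁻ z, ENNReal.ofReal ((s + ‖z‖) ^ (-p)) ∂μ
      = ENNReal.ofReal (s ^ ((finrank ℝ E : ℝ) - p)) *
        ∫⁻ w, ENNReal.ofReal ((1 + ‖w‖) ^ (-p)) ∂μ := by
  have hμ : μ = ENNReal.ofReal (s ^ finrank ℝ E) • μ.map (s • ·) := by
    rw [Measure.map_addHaar_smul μ hs.ne', smul_smul, ← ofReal_mul (by positivity),
      abs_of_pos (by positivity), mul_inv_cancel₀ (by positivity), ofReal_one, one_smul]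
  have hscale (w : E) : (s + ‖s • w‖) ^ (-p) = s ^ (-p) * (1 + ‖w‖) ^ (-p) := by
    rw [norm_smul, Real.norm_of_nonneg hs.le, ← Real.mul_rpow hs.le (by positivity)]
    ring_nf
  calc ∫⁻ z, ENNReal.ofReal ((s + ‖z‖) ^ (-p)) ∂μ
      = ENNReal.ofReal (s ^ finrank ℝ E) * ∫⁻ w, ENNReal.ofReal ((s + ‖s • w‖) ^ (-p)) ∂μ := by
        conv_lhs => rw [hμ]
        rw [lintegral_smul_measure, lintegral_map (by fun_prop) (by fun_prop), smul_eq_mul]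
    _ = ENNReal.ofReal (s ^ finrank ℝ E) * ENNReal.ofReal (s ^ (-p)) *
          ∫⁻ w, ENNReal.ofReal ((1 + ‖w‖) ^ (-p)) ∂μ := by
        simp_rw [hscale, ofReal_mul (Real.rpow_nonneg hs.le _)]
        rw [lintegral_const_mul _ (by fun_prop), mul_assoc]
    _ = _ := by
        rw [← ofReal_mul (by positivity), ← Real.rpow_natCast, ← Real.rpow_add hs, sub_eq_add_neg]

lemma lintegral_ofReal_rpow_neg_add_rpow_neg {s : ℝ} (hs : 0 < s) (p : ℝ) (y : E) :
    ∫⁻ x, ENNReal.ofReal ((s + ‖x - y‖) ^ (-p) + (1 + ‖x‖) ^ (-p)) ∂μ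
      = (ENNReal.ofReal (s ^ ((finrank ℝ E : ℝ) - p)) + 1) *
        ∫⁻ w, ENNReal.ofReal ((1 + ‖w‖) ^ (-p)) ∂μ := by
  have hsplit (x : E) : ENNReal.ofReal ((s + ‖x - y‖) ^ (-p) + (1 + ‖x‖) ^ (-p))
      = ENNReal.ofReal ((s + ‖x - y‖) ^ (-p)) + ENNReal.ofReal ((1 + ‖x‖) ^ (-p)) :=
    ofReal_add (by positivity) (by positivity)
  rw [lintegral_congr hsplit, lintegral_add_left (by fun_prop),
    lintegral_sub_right_eq_self (fun z => ENNReal.ofReal ((s + ‖z‖) ^ (-p))),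
    lintegral_ofReal_add_norm_rpow_neg μ hs, add_mul, one_mul]

theorem lintegral_weighted_convolution_le {s p : ℝ} (hs : 0 < s) (hp : 1 ≤ p) {g : E → ℝ}
    (hg0 : 0 ≤ g) (hg : AEMeasurable g μ) :
    ∫⁻ x, ENNReal.ofReal
        ((1 + ‖x‖) ^ (-p) * ∫ y, (s + ‖x - y‖) ^ (-p) * (1 + ‖y‖) ^ p * g y ∂μ) ∂μ
      ≤ ENNReal.ofReal (2 ^ (p - 1)) * (ENNReal.ofReal (s ^ ((finrank ℝ E : ℝ) - p)) + 1) *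
        (∫⁻ w, ENNReal.ofReal ((1 + ‖w‖) ^ (-p)) ∂μ) * ∫⁻ y, ENNReal.ofReal (g y) ∂μ := by
  have hK : Measurable fun z : E × E =>
      ENNReal.ofReal ((s + ‖z.1 - z.2‖) ^ (-p) + (1 + ‖z.1‖) ^ (-p)) := by fun_prop
  calc ∫⁻ x, ENNReal.ofReal
          ((1 + ‖x‖) ^ (-p) * ∫ y, (s + ‖x - y‖) ^ (-p) * (1 + ‖y‖) ^ p * g y ∂μ) ∂μ
      ≤ ∫⁻ x, ENNReal.ofReal (2 ^ (p - 1)) * ∫⁻ y, ENNReal.ofReal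
          ((s + ‖x - y‖) ^ (-p) + (1 + ‖x‖) ^ (-p)) * ENNReal.ofReal (g y) ∂μ ∂μ :=
        lintegral_mono (ofReal_weight_mul_integral_le_lintegral μ hs hp hg0)
    _ = ENNReal.ofReal (2 ^ (p - 1)) * ∫⁻ y, (∫⁻ x, ENNReal.ofReal
          ((s + ‖x - y‖) ^ (-p) + (1 + ‖x‖) ^ (-p)) ∂μ) * ENNReal.ofReal (g y) ∂μ := by
        rw [lintegral_const_mul' _ _ ofReal_ne_top, lintegral_lintegral_swap
          (hK.aemeasurable.mul hg.ennreal_ofReal.comp_snd)]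
        congr 1
        exact lintegral_congr fun y => lintegral_mul_const _ (by fun_prop)
    _ = _ := by
        simp_rw [lintegral_ofReal_rpow_neg_add_rpow_neg μ hs]
        rw [lintegral_const_mul'' _ hg.ennreal_ofReal]
        ring

end AddHaar

/-- the `L¹` endpoint of the weighted convolution estimate:
`‖(1+|x|)^{-4} ∫ (√t+|x-y|)^{-4} (1+|y|)^4 g(y) dy‖_{L¹} ≤ C t^{-1/2} ‖g‖_{L¹}`
for nonnegative `g ∈ L¹` and `0 < t ≤ 1`. -/
theorem stmt1 :
    ∃ C > (0 : ℝ), ∀ (t : ℝ), 0 < t → t ≤ 1 →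
      ∀ g : E3 → ℝ, 0 ≤ g → Integrable g →
        ∫⁻ x, ENNReal.ofReal ((1 + ‖x‖) ^ (-4 : ℝ) *
            ∫ y, (Real.sqrt t + ‖x - y‖) ^ (-4 : ℝ) * (1 + ‖y‖) ^ (4 : ℝ) * g y)
          ≤ ENNReal.ofReal (C * t ^ (-(1 : ℝ) / 2)) * ∫⁻ y, ENNReal.ofReal (g y) := by
  set A := ∫⁻ w : E3, ENNReal.ofReal ((1 + ‖w‖) ^ (-4 : ℝ))
  have hA : A ≠ ⊤ := (integrable_one_add_norm (by simp; norm_num)).lintegral_lt_top.ne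
  refine ⟨16 * (A.toReal + 1), by positivity, fun t ht ht1 g hg0 hg => ?_⟩
  have hs : 0 < √t := Real.sqrt_pos.2 ht
  have hs1 : 1 ≤ (√t)⁻¹ := (one_le_inv₀ hs).2 (Real.sqrt_le_one.2 ht1)
  have hts : t ^ (-(1 : ℝ) / 2) = (√t)⁻¹ := by
    rw [neg_div, Real.rpow_neg ht.le, Real.sqrt_eq_rpow]
  calc _ ≤ ENNReal.ofReal (2 ^ ((4 : ℝ) - 1)) *
          (ENNReal.ofReal (√t ^ ((finrank ℝ E3 : ℝ) - 4)) + 1) * A *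
          ∫⁻ y, ENNReal.ofReal (g y) :=
        lintegral_weighted_convolution_le volume hs (by norm_num) hg0 hg.aemeasurable
    _ = ENNReal.ofReal (8 * ((√t)⁻¹ + 1) * A.toReal) * ∫⁻ y, ENNReal.ofReal (g y) := by
        rw [finrank_euclideanSpace_fin, ofReal_mul (by positivity), ofReal_mul (by positivity),
          ofReal_add (by positivity) zero_le_one, ofReal_one, ofReal_toReal hA]
        norm_num [Real.rpow_neg_one]
    _ ≤ _ := by
        rw [hts]
        gcongr ENNReal.ofReal ?_ * _
        nlinarith [ENNReal.toReal_nonneg (a := A)]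
end
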